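/- arXiv:1403.5545 — 5 statements merged into one kernel-verified Lean document; each statement's English description precedes it below -/
import Mathlib

section
/- Let φ : [0,∞) → ℝ be twice continuously differentiable with φ(x) = x+1 on [0,1], φ(x) ≥ x+1 on [0,∞), and lim φ(x)/x = ∞, and let φ₁ be its greatest convex minorant. Then φ₁ is differentiable at every point of (0,∞). -/
/-!
`φ₁` is convex on `[0, ∞)` as a supremum of affine functions, so at `τ > 0` it has one-sided
derivatives `L ≤ R`, and every `k ∈ [L, R]` is the slope of a line supporting `φ₁` at `τ`.
If `φ₁ τ = φ τ`, such a line also touches `φ` from below at `τ`, forcing `k = φ' τ`.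
If `φ₁ τ < φ τ` and `L < R`, a line through `(τ, φ₁ τ)` of slope strictly between `L` and `R`
lies strictly below `φ` on `[0, ∞)`; since superlinear growth makes `φ x - k x` attain its
minimum there, the line can be raised while staying below `φ`, contradicting the definition of
`φ₁ τ`. Hence `L = R`.
-/

open Filter Set

noncomputable def bFun (φ : ℝ → ℝ) (k : ℝ) : ℝ :=
  sInf ((fun x => φ x - k * x) '' Set.Ici (0 : ℝ))

noncomputable def phi1 (φ : ℝ → ℝ) (x : ℝ) : ℝ :=
  sSup ((fun k => k * x + bFun φ k) '' Set.univ)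

open Topology

namespace ConvexOn

variable {S : Set ℝ} {f : ℝ → ℝ} {x y k : ℝ}

lemma add_mul_sub_le_of_leftDeriv_le_of_le_rightDeriv (hfc : ConvexOn ℝ S f)
    (hx : x ∈ interior S) (hL : derivWithin f (Iio x) x ≤ k)
    (hR : k ≤ derivWithin f (Ioi x) x) (hy : y ∈ S) : f x + k * (y - x) ≤ f y := by
  rcases lt_trichotomy y x with hyx | rfl | hxy
  · have h := (hfc.slope_le_leftDeriv_of_mem_interior hy hx hyx).trans hL
    rw [slope_def_field, div_le_iff₀ (sub_pos.2 hyx)] at h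
    linarith
  · simp
  · have h := hR.trans (hfc.rightDeriv_le_slope_of_mem_interior hx hy hxy)
    rw [slope_def_field, le_div_iff₀ (sub_pos.2 hxy)] at h
    linarith

lemma hasDerivAt_of_leftDeriv_eq_rightDeriv (hfc : ConvexOn ℝ S f) (hx : x ∈ interior S)
    (h : derivWithin f (Iio x) x = derivWithin f (Ioi x) x) :
    HasDerivAt f (derivWithin f (Ioi x) x) x := by
  have hL := hfc.hasDerivWithinAt_leftDeriv_of_mem_interior hx
  rw [h] at hL
  exact hasDerivAt_iff_tendsto_slope_left_right.2
    ⟨(hasDerivWithinAt_iff_tendsto_slope' self_notMem_Iio).1 hL,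
      (hasDerivWithinAt_iff_tendsto_slope' self_notMem_Ioi).1
        (hfc.hasDerivWithinAt_rightDeriv_of_mem_interior hx)⟩

end ConvexOn

lemma HasDerivAt.eq_of_eventually_add_mul_sub_le {ψ : ℝ → ℝ} {d k τ : ℝ} (hψ : HasDerivAt ψ d τ)
    (h : ∀ᶠ y in 𝓝 τ, ψ τ + k * (y - τ) ≤ ψ y) : d = k := by
  have hmin : IsLocalMin (fun y => ψ y - k * y) τ := h.mono fun y hy => by
    dsimp only; linarith
  have := hmin.hasDerivAt_eq_zero (hψ.sub ((hasDerivAt_id τ).const_mul k))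
  linarith

section GreatestConvexMinorant

variable {φ : ℝ → ℝ} {k x τ : ℝ}

lemma tendsto_sub_mul_atTop (hgrow : Tendsto (fun x => φ x / x) atTop atTop) (k : ℝ) :
    Tendsto (fun x => φ x - k * x) atTop atTop := by
  refine (tendsto_id.atTop_mul_atTop₀ (tendsto_atTop_add_const_right _ (-k) hgrow)).congr' ?_
  filter_upwards [eventually_gt_atTop 0] with x hx
  simp only [id]
  field_simp
  ring

lemma exists_isMinOn_sub_mul (hφ : Continuous φ) (hgrow : Tendsto (fun x => φ x / x) atTop atTop)
    (k : ℝ) : ∃ x₀ ∈ Ici (0 : ℝ), IsMinOn (fun x => φ x - k * x) (Ici 0) x₀ := by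
  refine (hφ.sub (continuous_const.mul continuous_id)).continuousOn.exists_isMinOn' isClosed_Ici
    self_mem_Ici ?_
  rw [cocompact_eq_atBot_atTop, eventually_inf_principal, eventually_sup]
  exact ⟨(eventually_lt_atBot 0).mono fun x hx hx₀ => absurd hx₀ (not_le.2 hx),
    ((tendsto_sub_mul_atTop hgrow k).eventually_ge_atTop _).mono fun x hx _ => hx⟩

lemma bddBelow_sub_mul (hφ : Continuous φ) (hgrow : Tendsto (fun x => φ x / x) atTop atTop)
    (k : ℝ) : BddBelow ((fun x => φ x - k * x) '' Ici 0) :=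
  let ⟨_, _, hmin⟩ := exists_isMinOn_sub_mul hφ hgrow k
  hmin.bddBelow

lemma bFun_eq_of_isMinOn {x₀ : ℝ} (hx₀ : x₀ ∈ Ici (0 : ℝ))
    (h : IsMinOn (fun x => φ x - k * x) (Ici 0) x₀) : bFun φ k = φ x₀ - k * x₀ :=
  IsLeast.csInf_eq ⟨mem_image_of_mem _ hx₀, forall_mem_image.2 fun _ hx => isMinOn_iff.1 h _ hx⟩

lemma mul_add_bFun_le (hb : BddBelow ((fun x => φ x - k * x) '' Ici 0)) (hx : 0 ≤ x) :
    k * x + bFun φ k ≤ φ x := by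
  have h : bFun φ k ≤ φ x - k * x := csInf_le hb ⟨x, hx, rfl⟩
  linarith

lemma phi1_le (hb : ∀ k, BddBelow ((fun x => φ x - k * x) '' Ici 0)) (hx : 0 ≤ x) :
    phi1 φ x ≤ φ x :=
  csSup_le (univ_nonempty.image _) <| forall_mem_image.2 fun k _ => mul_add_bFun_le (hb k) hx

lemma mul_add_bFun_le_phi1 (hb : ∀ k, BddBelow ((fun x => φ x - k * x) '' Ici 0)) (hx : 0 ≤ x)
    (k : ℝ) : k * x + bFun φ k ≤ phi1 φ x :=
  le_csSup ⟨φ x, forall_mem_image.2 fun k _ => mul_add_bFun_le (hb k) hx⟩ ⟨k, trivial, rfl⟩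

lemma convexOn_phi1 (hb : ∀ k, BddBelow ((fun x => φ x - k * x) '' Ici 0)) :
    ConvexOn ℝ (Ici 0) (phi1 φ) := by
  refine ⟨convex_Ici 0, fun x hx y hy a b ha hb' hab => ?_⟩
  refine csSup_le (univ_nonempty.image _) <| forall_mem_image.2 fun k _ => ?_
  have hx' := mul_le_mul_of_nonneg_left (mul_add_bFun_le_phi1 hb hx k) ha
  have hy' := mul_le_mul_of_nonneg_left (mul_add_bFun_le_phi1 hb hy k) hb'
  have hsplit : k * (a * x + b * y) + bFun φ k
      = a * (k * x + bFun φ k) + b * (k * y + bFun φ k) := by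
    linear_combination (-bFun φ k) * hab
  simp only [smul_eq_mul, hsplit]
  linarith

lemma add_mul_lt_phi1 (hb : ∀ k, BddBelow ((fun x => φ x - k * x) '' Ici 0)) {x₀ c : ℝ}
    (hx₀ : x₀ ∈ Ici (0 : ℝ)) (hmin : IsMinOn (fun x => φ x - k * x) (Ici 0) x₀)
    (hline : ∀ y ∈ Ici (0 : ℝ), c + k * y < φ y) (hτ : 0 ≤ τ) : c + k * τ < phi1 φ τ := by
  have h₁ := hline x₀ hx₀
  have h₂ := mul_add_bFun_le_phi1 hb hτ k
  rw [bFun_eq_of_isMinOn hx₀ hmin] at h₂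
  linarith

lemma supporting_slopes_eq_of_phi1_lt (hφ : Continuous φ)
    (hgrow : Tendsto (fun x => φ x / x) atTop atTop) (hlt : phi1 φ τ < φ τ) {k₁ k₂ : ℝ}
    (h₁ : ∀ y ∈ Ici (0 : ℝ), phi1 φ τ + k₁ * (y - τ) ≤ phi1 φ y)
    (h₂ : ∀ y ∈ Ici (0 : ℝ), phi1 φ τ + k₂ * (y - τ) ≤ phi1 φ y) (hτ : 0 ≤ τ) (hk : k₁ ≤ k₂) :
    k₁ = k₂ := by
  have hb := bddBelow_sub_mul hφ hgrow
  by_contra hne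
  obtain ⟨k, hk₁, hk₂⟩ := exists_between (hk.lt_of_ne hne)
  have hline : ∀ y ∈ Ici (0 : ℝ), (phi1 φ τ - k * τ) + k * y < φ y := by
    intro y hy
    have hφy := phi1_le hb hy
    rcases lt_trichotomy y τ with hyτ | rfl | hτy
    · linarith [h₁ y hy, mul_pos (sub_pos.2 hk₁) (sub_pos.2 hyτ)]
    · linarith
    · linarith [h₂ y hy, mul_pos (sub_pos.2 hk₂) (sub_pos.2 hτy)]
  obtain ⟨x₀, hx₀, hmin⟩ := exists_isMinOn_sub_mul hφ hgrow k
  linarith [add_mul_lt_phi1 hb hx₀ hmin hline hτ]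

lemma supporting_slope_eq_deriv_of_phi1_eq (hb : ∀ k, BddBelow ((fun x => φ x - k * x) '' Ici 0))
    {d : ℝ} (hd : HasDerivAt φ d τ) (hτ : 0 < τ) (heq : phi1 φ τ = φ τ)
    (hk : ∀ y ∈ Ici (0 : ℝ), phi1 φ τ + k * (y - τ) ≤ phi1 φ y) : d = k := by
  refine hd.eq_of_eventually_add_mul_sub_le ?_
  filter_upwards [Ioi_mem_nhds hτ] with y (hy : 0 < y)
  rw [← heq]
  exact (hk y hy.le).trans (phi1_le hb hy.le)

end GreatestConvexMinorant

theorem stmt12_general (φ φ' : ℝ → ℝ)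
    (hderiv : ∀ x, HasDerivAt φ (φ' x) x)
    (hgrow : Tendsto (fun x => φ x / x) atTop atTop) :
    ∀ τ ∈ Set.Ioi (0 : ℝ), DifferentiableAt ℝ (phi1 φ) τ := by
  intro τ (hτ : 0 < τ)
  have hφ : Continuous φ := continuous_iff_continuousAt.2 fun x => (hderiv x).continuousAt
  have hb := bddBelow_sub_mul hφ hgrow
  have hconv := convexOn_phi1 hb
  have hint : τ ∈ interior (Ici (0 : ℝ)) := by rwa [interior_Ici]
  have hLR := hconv.leftDeriv_le_rightDeriv_of_mem_interior hint
  have hsupp : ∀ k, derivWithin (phi1 φ) (Iio τ) τ ≤ k → k ≤ derivWithin (phi1 φ) (Ioi τ) τ →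
      ∀ y ∈ Ici (0 : ℝ), phi1 φ τ + k * (y - τ) ≤ phi1 φ y := fun k hL hR y hy =>
    hconv.add_mul_sub_le_of_leftDeriv_le_of_le_rightDeriv hint hL hR hy
  refine (hconv.hasDerivAt_of_leftDeriv_eq_rightDeriv hint ?_).differentiableAt
  rcases (phi1_le hb hτ.le).lt_or_eq with hlt | htouch
  · exact supporting_slopes_eq_of_phi1_lt hφ hgrow hlt (hsupp _ le_rfl hLR) (hsupp _ hLR le_rfl)
      hτ.le hLR
  · have hL := supporting_slope_eq_deriv_of_phi1_eq hb (hderiv τ) hτ htouch (hsupp _ le_rfl hLR)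
    have hR := supporting_slope_eq_deriv_of_phi1_eq hb (hderiv τ) hτ htouch (hsupp _ hLR le_rfl)
    exact hL.symm.trans hR

/-- the greatest convex minorant `φ₁` of `φ` is differentiable on `(0,∞)`. -/
theorem stmt12 (φ φ' φ'' : ℝ → ℝ)
    (hderiv : ∀ x, HasDerivAt φ (φ' x) x)
    (hderiv2 : ∀ x, HasDerivAt φ' (φ'' x) x) (hcont : Continuous φ'')
    (heq : ∀ x ∈ Set.Icc (0 : ℝ) 1, φ x = x + 1)
    (hge : ∀ x ∈ Set.Ici (0 : ℝ), x + 1 ≤ φ x)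
    (hgrow : Tendsto (fun x => φ x / x) atTop atTop) :
    ∀ τ ∈ Set.Ioi (0 : ℝ), DifferentiableAt ℝ (phi1 φ) τ :=
  stmt12_general φ φ' hderiv hgrow
end

section
/- Let φ be as above (twice continuously differentiable, φ = x+1 on [0,1], φ ≥ x+1, φ(x)/x → ∞), additionally satisfying lim_{x→∞} φ'(x)/φ(x) = 0, and let φ₁ be its greatest convex minorant. Then lim_{x→∞} φ₁'(x)/φ₁(x) = 0. -/
open Filter Set

open Topology in
/-- if moreover `φ'(x)/φ(x) → 0`, then `φ₁'(x)/φ₁(x) → 0`. -/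
theorem stmt13 (φ φ' φ'' : ℝ → ℝ)
    (hderiv : ∀ x, HasDerivAt φ (φ' x) x)
    (hderiv2 : ∀ x, HasDerivAt φ' (φ'' x) x) (hcont : Continuous φ'')
    (heq : ∀ x ∈ Set.Icc (0 : ℝ) 1, φ x = x + 1)
    (hge : ∀ x ∈ Set.Ici (0 : ℝ), x + 1 ≤ φ x)
    (hgrow : Tendsto (fun x => φ x / x) atTop atTop)
    (hratio : Tendsto (fun x => φ' x / φ x) atTop (nhds 0)) :
    Tendsto (fun x => deriv (phi1 φ) x / phi1 φ x) atTop (nhds 0) := by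
  have hφc : Continuous φ :=
    continuous_iff_continuousAt.2 fun x => (hderiv x).continuousAt
  have hφ'c : Continuous φ' :=
    continuous_iff_continuousAt.2 fun x => (hderiv2 x).continuousAt
  have hψc : ∀ k : ℝ, Continuous (fun y => φ y - k * y) := fun k => by fun_prop
  -- boundedness below of the sets defining bFun
  have hbdd : ∀ k : ℝ, BddBelow ((fun y => φ y - k * y) '' Set.Ici (0 : ℝ)) := by
    intro k
    obtain ⟨a, ha⟩ := (hgrow.eventually_ge_atTop (|k| + 1)).exists_forall_of_atTop
    set M : ℝ := max a 1 with hM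
    obtain ⟨c, hcmem, hcmin⟩ := isCompact_Icc.exists_isMinOn
      (nonempty_Icc.2 (by positivity : (0:ℝ) ≤ M)) ((hψc k).continuousOn)
    refine ⟨min (φ c - k * c) 0, ?_⟩
    rintro z ⟨y, hy, rfl⟩
    rcases le_or_gt y M with h | h
    · exact le_trans (min_le_left _ _) (hcmin ⟨hy, h⟩)
    · refine le_trans (min_le_right _ _) ?_
      show (0:ℝ) ≤ φ y - k * y
      have hy1 : (1:ℝ) ≤ y := le_trans (le_max_right a 1) h.le
      have hya : a ≤ y := le_trans (le_max_left a 1) h.le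
      have hy0 : (0:ℝ) < y := by linarith
      have h2 : (|k| + 1) * y ≤ φ y := (le_div_iff₀ hy0).1 (ha y hya)
      have h3 : k * y ≤ |k| * y := mul_le_mul_of_nonneg_right (le_abs_self k) hy0.le
      nlinarith
  have hble : ∀ k : ℝ, ∀ y, 0 ≤ y → bFun φ k ≤ φ y - k * y := by
    intro k y hy
    exact csInf_le (hbdd k) ⟨y, hy, rfl⟩
  have hφ0 : φ 0 = 1 := by simpa using heq 0 (by norm_num)
  have hb1 : (1:ℝ) ≤ bFun φ 1 := by
    refine le_csInf ⟨φ 0 - 1 * 0, ⟨0, Set.self_mem_Ici, rfl⟩⟩ ?_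
    rintro z ⟨y, hy, rfl⟩
    show (1:ℝ) ≤ φ y - 1 * y
    have := hge y hy
    linarith
  have hne : ∀ x : ℝ, ((fun k => k * x + bFun φ k) '' Set.univ).Nonempty :=
    fun x => ⟨1 * x + bFun φ 1, ⟨1, trivial, rfl⟩⟩
  have hub : ∀ x, 0 ≤ x → ∀ k, k * x + bFun φ k ≤ φ x := by
    intro x hx k
    have := hble k x hx
    linarith
  have hbddA : ∀ x, 0 ≤ x → BddAbove ((fun k => k * x + bFun φ k) '' Set.univ) := by
    intro x hx
    exact ⟨φ x, by rintro z ⟨k, -, rfl⟩; exact hub x hx k⟩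
  have hgge : ∀ x, 0 ≤ x → ∀ k, k * x + bFun φ k ≤ phi1 φ x := by
    intro x hx k
    exact le_csSup (hbddA x hx) ⟨k, trivial, rfl⟩
  have hgle : ∀ x, 0 ≤ x → phi1 φ x ≤ φ x := by
    intro x hx
    exact csSup_le (hne x) (by rintro z ⟨k, -, rfl⟩; exact hub x hx k)
  have hglin : ∀ x, 0 ≤ x → x + 1 ≤ phi1 φ x := by
    intro x hx
    have := hgge x hx 1
    linarith
  have hg0 : phi1 φ 0 = 1 := by
    have h1 := hgle 0 le_rfl
    have h2 := hglin 0 le_rfl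
    rw [hφ0] at h1
    linarith
  have hconv : ConvexOn ℝ (Set.Ici (0:ℝ)) (phi1 φ) := by
    refine ⟨convex_Ici 0, ?_⟩
    intro x hx y hy a b ha hb hab
    refine csSup_le (hne _) ?_
    rintro z ⟨k, -, rfl⟩
    show k * (a • x + b • y) + bFun φ k ≤ a • phi1 φ x + b • phi1 φ y
    simp only [smul_eq_mul]
    have e1 : a * (k * x + bFun φ k) ≤ a * phi1 φ x :=
      mul_le_mul_of_nonneg_left (hgge x hx k) ha
    have e2 : b * (k * y + bFun φ k) ≤ b * phi1 φ y :=
      mul_le_mul_of_nonneg_left (hgge y hy k) hb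
    have key : k * (a * x + b * y) + bFun φ k
        = a * (k * x + bFun φ k) + b * (k * y + bFun φ k) := by
      linear_combination (-(bFun φ k)) * hab
    rw [key]
    exact add_le_add e1 e2
  -- main limit
  rw [Metric.tendsto_atTop]
  intro ε hε
  obtain ⟨X₀, hX₀⟩ := Metric.tendsto_atTop.mp hratio (ε/2) (half_pos hε)
  set X : ℝ := max X₀ 0 with hXdef
  have hX0 : (0:ℝ) ≤ X := le_max_right _ _
  obtain ⟨c, hcmem, hcmax⟩ := isCompact_Icc.exists_isMaxOn (nonempty_Icc.2 hX0)
    (hφ'c.continuousOn : ContinuousOn φ' (Icc 0 X))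
  set C : ℝ := max (φ' c) 1 with hCdef
  have hC1 : (1:ℝ) ≤ C := le_max_right _ _
  refine ⟨max 2 (2*C/ε), fun x hx => ?_⟩
  have hx2 : (2:ℝ) ≤ x := le_trans (le_max_left _ _) hx
  have hxC : 2*C/ε ≤ x := le_trans (le_max_right _ _) hx
  have hx0 : (0:ℝ) < x := by linarith
  set g := phi1 φ with hgdef
  have hgx : x + 1 ≤ g x := hglin x hx0.le
  have hgxpos : (0:ℝ) < g x := by linarith
  rw [Real.dist_eq, sub_zero]
  by_cases hdiff : DifferentiableAt ℝ g x
  swap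
  · rw [deriv_zero_of_not_differentiableAt hdiff]
    simpa using hε
  set k := deriv g x with hk
  have hder : HasDerivAt g k x := hdiff.hasDerivAt
  -- supporting line, expanded form
  have hsupp : ∀ y, 0 ≤ y → g x + k * y - k * x ≤ g y := by
    intro y hy
    rcases lt_trichotomy y x with h | h | h
    · have hs := hconv.slope_le_of_hasDerivAt hy (le_of_lt hx0 : x ∈ Ici (0:ℝ)) h hder
      rw [slope_def_field] at hs
      have hxy : (0:ℝ) < x - y := by linarith
      rw [div_le_iff₀ hxy] at hs
      nlinarith
    · rw [h]; ring_nf; exact le_rfl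
    · have hs := hconv.le_slope_of_hasDerivAt (le_of_lt hx0 : x ∈ Ici (0:ℝ)) hy h hder
      rw [slope_def_field] at hs
      have hxy : (0:ℝ) < y - x := by linarith
      rw [le_div_iff₀ hxy] at hs
      nlinarith
  have hk1 : 1 ≤ k := by
    have h0 := hsupp 0 le_rfl
    rw [hg0] at h0
    nlinarith
  have hgeq : g x = k * x + bFun φ k := by
    have h1 := hgge x hx0.le k
    have h2 : g x - k * x ≤ bFun φ k := by
      refine le_csInf ⟨φ 0 - k * 0, ⟨0, Set.self_mem_Ici, rfl⟩⟩ ?_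
      rintro z ⟨y, hy, rfl⟩
      show g x - k * x ≤ φ y - k * y
      have h3 := hsupp y hy
      have h4 := hgle y hy
      linarith
    linarith
  -- minimizer of φ y - k y on [0, x]
  obtain ⟨x₀, hx₀mem, hx₀min⟩ := isCompact_Icc.exists_isMinOn
    (nonempty_Icc.2 hx0.le) ((hψc k).continuousOn : ContinuousOn _ (Icc 0 x))
  have hx₀0 : (0:ℝ) ≤ x₀ := hx₀mem.1
  have hψx₀ : φ x₀ - k * x₀ = bFun φ k := by
    refine le_antisymm ?_ (hble k x₀ hx₀0)
    by_contra hcon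
    push_neg at hcon
    set δ : ℝ := (φ x₀ - k * x₀) - bFun φ k with hδdef
    have hδ : 0 < δ := by linarith
    set η : ℝ := δ / x with hηdef
    have hη : 0 < η := div_pos hδ hx0
    have hηx : η * x = δ := div_mul_cancel₀ δ (ne_of_gt hx0)
    have hbk' : bFun φ k + η * x ≤ bFun φ (k - η) := by
      refine le_csInf ⟨φ 0 - (k - η) * 0, ⟨0, Set.self_mem_Ici, rfl⟩⟩ ?_
      rintro z ⟨y, hy, rfl⟩
      show bFun φ k + η * x ≤ φ y - (k - η) * y
      have hy0 : (0:ℝ) ≤ y := hy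
      rcases le_or_gt y x with h | h
      · have h1 : φ x₀ - k * x₀ ≤ φ y - k * y := hx₀min ⟨hy0, h⟩
        have h2 : 0 ≤ η * y := mul_nonneg hη.le hy0
        have h5 : (k - η) * y = k * y - η * y := by ring
        rw [h5]
        linarith
      · have h1 := hble k y hy0
        have h2 : η * x ≤ η * y := mul_le_mul_of_nonneg_left h.le hη.le
        have h5 : (k - η) * y = k * y - η * y := by ring
        rw [h5]
        linarith
    have hslope : ∀ y, 0 ≤ y → y < x → slope g x y ≤ k - η := by
      intro y hy hyx
      have h1 := hgge y hy (k - η)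
      have h2 : (k - η) * (y - x) ≤ g y - g x := by
        have h5 : (k - η) * y = k * y - η * y := by ring
        have h6 : (k - η) * (y - x) = (k * y - η * y) - (k * x - η * x) := by ring
        rw [h6]
        have h7 : 0 ≤ η * y := mul_nonneg hη.le hy
        rw [h5] at h1
        linarith [hgeq]
      rw [slope_def_field, div_le_iff_of_neg (by linarith : y - x < 0)]
      nlinarith
    have htl : Tendsto (slope g x) (𝓝[<] x) (𝓝 k) :=
      (hasDerivAt_iff_tendsto_slope.mp hder).mono_left
        (nhdsWithin_mono _ (fun y hy => ne_of_lt hy))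
    have hev : ∀ᶠ y in 𝓝[<] x, slope g x y ≤ k - η := by
      filter_upwards [eventually_nhdsWithin_of_eventually_nhds (eventually_gt_nhds hx0),
        self_mem_nhdsWithin] with y h1 h2
      exact hslope y h1.le h2
    have : k ≤ k - η := le_of_tendsto htl hev
    linarith
  have hkφ' : k ≤ φ' x₀ := by
    have hψd : HasDerivAt (fun y => φ y - k * y) (φ' x₀ - k * 1) x₀ :=
      (hderiv x₀).sub ((hasDerivAt_id x₀).const_mul k)
    have htr : Tendsto (slope (fun y => φ y - k * y) x₀) (𝓝[>] x₀) (𝓝 (φ' x₀ - k * 1)) :=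
      (hasDerivAt_iff_tendsto_slope.mp hψd).mono_left
        (nhdsWithin_mono _ (fun y hy => ne_of_gt hy))
    have hev : ∀ᶠ y in 𝓝[>] x₀, 0 ≤ slope (fun y => φ y - k * y) x₀ y := by
      filter_upwards [self_mem_nhdsWithin] with y hy
      have hy0 : 0 ≤ y := le_trans hx₀0 (le_of_lt hy)
      have h1 := hble k y hy0
      rw [slope_def_field]
      refine div_nonneg ?_ (by exact sub_nonneg.2 (le_of_lt hy))
      show 0 ≤ (φ y - k * y) - (φ x₀ - k * x₀)
      rw [hψx₀]
      linarith
    have := ge_of_tendsto htr hev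
    linarith
  have hknn : (0:ℝ) ≤ k := by linarith
  have habs : |k / g x| = k / g x := abs_of_nonneg (div_nonneg hknn hgxpos.le)
  rw [habs]
  by_cases hcase : x₀ ≤ X
  · have hφ'x₀ : φ' x₀ ≤ φ' c := hcmax ⟨hx₀0, hcase⟩
    have hkC : k ≤ C := le_trans (hkφ'.trans hφ'x₀) (le_max_left _ _)
    have h1 : k / g x ≤ C / x :=
      div_le_div₀ (by linarith) hkC hx0 (by linarith)
    have h2 : C / x ≤ ε/2 := by
      rw [div_le_iff₀ hx0]
      rw [div_le_iff₀ hε] at hxC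
      linarith
    linarith
  · push_neg at hcase
    have hx₀X₀ : X₀ ≤ x₀ := le_trans (le_max_left _ _) hcase.le
    have hφpos : (0:ℝ) < φ x₀ := lt_of_lt_of_le (by linarith) (hge x₀ hx₀0)
    have hr := hX₀ x₀ hx₀X₀
    rw [Real.dist_eq, sub_zero] at hr
    have hrle : φ' x₀ / φ x₀ ≤ ε/2 := le_of_lt (lt_of_le_of_lt (le_abs_self _) hr)
    have hkb : k ≤ ε/2 * φ x₀ := by
      rw [div_le_iff₀ hφpos] at hrle
      linarith
    have hp : 0 ≤ k * (x - x₀) := mul_nonneg hknn (sub_nonneg.2 hx₀mem.2)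
    have hgxφ : φ x₀ ≤ g x := by
      have h6 : k * (x - x₀) = k * x - k * x₀ := by ring
      rw [h6] at hp
      linarith [hgeq, hψx₀]
    have hfin : k / g x ≤ ε/2 := by
      rw [div_le_iff₀ hgxpos]
      have := mul_le_mul_of_nonneg_left hgxφ (by linarith : (0:ℝ) ≤ ε/2)
      linarith
    linarith
end

section
/- Let φ : [0,∞) → ℝ be continuous with lim_{x→∞} φ(x)/x = ∞ and let φ₁ be its greatest convex minorant. Then the set F = {x ≥ 0 : φ₁(x) = φ(x)} is unbounded. -/
open Filter Set

/-- A global minimizer of `φ x - k x` on `[0, ∞)` exists. -/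
lemma exists_min_aux (φ : ℝ → ℝ) (hcont : ContinuousOn φ (Set.Ici 0))
    (hgrow : Tendsto (fun x => φ x / x) atTop atTop) (k : ℝ) :
    ∃ x₀, 0 ≤ x₀ ∧ ∀ x, 0 ≤ x → φ x₀ - k * x₀ ≤ φ x - k * x := by
  obtain ⟨R₀, hR₀⟩ := (hgrow.eventually_ge_atTop (k + 1)).exists_forall_of_atTop
  set R : ℝ := max (max R₀ 1) (φ 0) with hR
  have h0R : (0 : ℝ) ≤ R :=
    le_trans zero_le_one (le_trans (le_max_right _ _) (le_max_left _ _))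
  have hcont' : ContinuousOn (fun x => φ x - k * x) (Set.Icc 0 R) := by
    apply ContinuousOn.sub
    · exact hcont.mono (fun x hx => hx.1)
    · exact continuousOn_const.mul continuousOn_id
  obtain ⟨x₀, hx₀mem, hx₀min⟩ := isCompact_Icc.exists_isMinOn ⟨0, le_refl 0, h0R⟩ hcont'
  refine ⟨x₀, hx₀mem.1, ?_⟩
  intro x hx
  by_cases hxR : x ≤ R
  · exact hx₀min ⟨hx, hxR⟩
  · push_neg at hxR
    have hxR₀ : R₀ ≤ x := le_trans (le_trans (le_max_left _ _) (le_max_left _ _)) hxR.le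
    have hx1 : (1 : ℝ) ≤ x := le_trans (le_trans (le_max_right _ _) (le_max_left _ _)) hxR.le
    have hxpos : (0 : ℝ) < x := lt_of_lt_of_le one_pos hx1
    have hdiv : k + 1 ≤ φ x / x := hR₀ x hxR₀
    have hφx : (k + 1) * x ≤ φ x := by
      rw [← div_mul_cancel₀ (φ x) (ne_of_gt hxpos)]
      exact mul_le_mul_of_nonneg_right hdiv hxpos.le
    have h1 : φ x₀ - k * x₀ ≤ φ 0 - k * 0 := hx₀min ⟨le_refl 0, h0R⟩
    have h2 : φ 0 ≤ R := le_max_right _ _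
    have h3 : R ≤ x := hxR.le
    nlinarith

/-- `bFun φ k ≤ φ x - k x` for `x ≥ 0`. -/
lemma bFun_le (φ : ℝ → ℝ) (hcont : ContinuousOn φ (Set.Ici 0))
    (hgrow : Tendsto (fun x => φ x / x) atTop atTop) (k x : ℝ) (hx : 0 ≤ x) :
    bFun φ k ≤ φ x - k * x := by
  obtain ⟨x₀, hx₀, hmin⟩ := exists_min_aux φ hcont hgrow k
  exact csInf_le ⟨φ x₀ - k * x₀, fun y ⟨z, hz, hzy⟩ => hzy ▸ hmin z hz⟩ ⟨x, hx, rfl⟩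

/-- `phi1 φ x ≤ φ x` for `x ≥ 0`. -/
lemma phi1_le_s14 (φ : ℝ → ℝ) (hcont : ContinuousOn φ (Set.Ici 0))
    (hgrow : Tendsto (fun x => φ x / x) atTop atTop) (x : ℝ) (hx : 0 ≤ x) :
    phi1 φ x ≤ φ x := by
  apply csSup_le (Set.univ_nonempty.image _)
  rintro y ⟨k, -, rfl⟩
  dsimp only
  have := bFun_le φ hcont hgrow k x hx
  linarith

/-- the coincidence set `F = {x ≥ 0 : φ₁(x) = φ(x)}` is unbounded. -/
theorem stmt14 (φ : ℝ → ℝ) (hcont : ContinuousOn φ (Set.Ici 0))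
    (hgrow : Tendsto (fun x => φ x / x) atTop atTop) :
    ¬ BddAbove {x : ℝ | 0 ≤ x ∧ phi1 φ x = φ x} := by
  rintro ⟨M₀, hM₀⟩
  set m : ℝ := max M₀ 0 with hm
  have hm0 : (0 : ℝ) ≤ m := le_max_right _ _
  -- minimum of φ on [0, m]
  obtain ⟨xm, hxmmem, hxmmin⟩ := isCompact_Icc.exists_isMinOn ⟨0, le_refl 0, hm0⟩
    (hcont.mono (fun x hx => hx.1) : ContinuousOn φ (Set.Icc 0 m))
  set k : ℝ := max 0 (φ (m + 1) - φ xm) + 1 with hk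
  have hkpos : 0 < k := lt_of_le_of_lt (le_max_left _ _) (lt_add_one _)
  have hkgt : φ (m + 1) - φ xm < k := lt_of_le_of_lt (le_max_right _ _) (lt_add_one _)
  obtain ⟨x₀, hx₀0, hmin⟩ := exists_min_aux φ hcont hgrow k
  -- bFun φ k = φ x₀ - k * x₀
  have hbFun : bFun φ k = φ x₀ - k * x₀ := by
    refine le_antisymm (csInf_le ⟨φ x₀ - k * x₀,
      fun y ⟨z, hz, hzy⟩ => hzy ▸ hmin z hz⟩ ⟨x₀, hx₀0, rfl⟩) ?_
    exact le_csInf ⟨φ x₀ - k * x₀, x₀, hx₀0, rfl⟩ (fun y ⟨z, hz, hzy⟩ => hzy ▸ hmin z hz)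
  -- x₀ is in the coincidence set
  have hphi1 : phi1 φ x₀ = φ x₀ := by
    refine le_antisymm (phi1_le_s14 φ hcont hgrow x₀ hx₀0) ?_
    have hmem : k * x₀ + bFun φ k ∈ (fun k => k * x₀ + bFun φ k) '' Set.univ :=
      ⟨k, mem_univ k, rfl⟩
    have hbdd : BddAbove ((fun k => k * x₀ + bFun φ k) '' Set.univ) := by
      refine ⟨φ x₀, ?_⟩
      rintro y ⟨k', -, rfl⟩
      dsimp only
      have := bFun_le φ hcont hgrow k' x₀ hx₀0
      linarith
    have := le_csSup hbdd hmem
    rw [hbFun] at this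
    have heq : k * x₀ + (φ x₀ - k * x₀) = φ x₀ := by ring
    rw [heq] at this
    exact this
  -- x₀ > m
  have hx₀gt : m < x₀ := by
    by_contra h
    push_neg at h
    have h1 : φ x₀ - k * x₀ ≤ φ (m + 1) - k * (m + 1) :=
      hmin (m + 1) (by linarith)
    have h2 : φ xm ≤ φ x₀ := hxmmin ⟨hx₀0, h⟩
    have h3 : k * x₀ ≤ k * m := mul_le_mul_of_nonneg_left h hkpos.le
    linarith
  have := hM₀ ⟨hx₀0, hphi1⟩
  have : x₀ ≤ m := le_trans this (le_max_left _ _)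
  linarith
end

section
/- Let ρ(r) be a zero proximate order with V(r) = r^{ρ(r)} satisfying V(r)V(1/r) = 1, and let K : (0,∞) → ℝ be such that for some δ > 0 both t ↦ t^δ K(t) and t ↦ t^{−δ} K(t) are in L¹(0,∞). Then lim_{r→∞} (1/(r V(r))) ∫₀^∞ K(t/r) V(t) dt = ∫₀^∞ K(t) dt. -/
/-!
Write `V(r) = exp (M (log r))` with `M x = x * ρ(eˣ)`. Then `M' x = eˣ ρ'(eˣ) x + ρ(eˣ) → 0`,
and `V(r) V(1/r) = 1` says that `M` is odd. By the mean value theorem `M (x + y) - M x → 0`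
for each fixed `y`, and, since `M` grows sublinearly on both sides,
`|M (x + y) - M x| ≤ C + δ |y|` for all large `x`; that is, `V(rs)/V(r) → 1` and
`V(rs)/V(r) ≤ e^C (s^δ + s^{-δ})`. The substitution `t = r s` turns the normalised integral
into `∫ K(s) V(rs)/V(r) ds`, and dominated convergence with dominant
`e^C (|s^δ K(s)| + |s^{-δ} K(s)|)` finishes the proof.
-/

open Filter Set Real Topology MeasureTheory

section LogCoordinates

variable {M m : ℝ → ℝ}

theorem abs_sub_le_of_abs_deriv_le (hM : ∀ x, HasDerivAt M (m x) x) {A η : ℝ}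
    (hm : ∀ x ≥ A, |m x| ≤ η) {x y : ℝ} (hx : A ≤ x) (hy : A ≤ y) :
    |M y - M x| ≤ η * |y - x| :=
  (convex_Ici A).norm_image_sub_le_of_norm_hasDerivWithin_le
    (fun u _ => (hM u).hasDerivWithinAt) hm hx hy

theorem tendsto_sub_add_of_tendsto_deriv (hM : ∀ x, HasDerivAt M (m x) x)
    (hm : Tendsto m atTop (𝓝 0)) (y : ℝ) :
    Tendsto (fun x => M (x + y) - M x) atTop (𝓝 0) := by
  rw [Metric.tendsto_nhds]
  intro ε hε
  have hη : 0 < ε / (|y| + 1) := by positivity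
  obtain ⟨A, hA⟩ := eventually_atTop.1 (Metric.tendsto_nhds.1 hm _ hη)
  have hmA : ∀ u ≥ A, |m u| ≤ ε / (|y| + 1) := fun u hu => by
    simpa [Real.dist_eq] using (hA u hu).le
  filter_upwards [eventually_ge_atTop A, eventually_ge_atTop (A - y)] with x hx hxy
  rw [Real.dist_eq, sub_zero]
  calc |M (x + y) - M x| ≤ ε / (|y| + 1) * |x + y - x| :=
        abs_sub_le_of_abs_deriv_le hM hmA hx (by linarith)
    _ < ε := by
        rw [add_sub_cancel_left, div_mul_eq_mul_div, div_lt_iff₀ (by positivity)]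
        nlinarith [abs_nonneg y]

theorem exists_abs_le_const_add_mul_abs (hM : ∀ x, HasDerivAt M (m x) x)
    (hodd : ∀ x, M (-x) = -M x) {A η : ℝ} (hm : ∀ x ≥ A, |m x| ≤ η) :
    ∃ C, ∀ x, |M x| ≤ C + η * |x| := by
  set B := max A 0
  have hη : 0 ≤ η := (abs_nonneg _).trans (hm A le_rfl)
  have hmB : ∀ x ≥ B, |m x| ≤ η := fun x hx => hm x (le_of_max_le_left hx)
  obtain ⟨C, hC⟩ := isCompact_Icc.exists_bound_of_continuousOn
    (fun x _ => (hM x).continuousAt.continuousWithinAt : ContinuousOn M (Icc (-B) B))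
  have hB : 0 ≤ B := le_max_right _ _
  have hnonneg : ∀ x ≥ 0, |M x| ≤ C + η * |x| := by
    intro x hx
    rw [abs_of_nonneg hx]
    rcases le_total x B with hxB | hBx
    · have := hC x ⟨by linarith, hxB⟩
      rw [Real.norm_eq_abs] at this
      nlinarith
    · have h₁ : |M B| ≤ C := by simpa using hC B ⟨by linarith, le_rfl⟩
      have h₂ := abs_sub_le_of_abs_deriv_le hM hmB le_rfl hBx
      rw [abs_of_nonneg (sub_nonneg.2 hBx)] at h₂
      nlinarith [abs_sub_abs_le_abs_sub (M x) (M B)]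
  refine ⟨C, fun x => ?_⟩
  rcases le_total 0 x with hx | hx
  · exact hnonneg x hx
  · simpa [hodd, abs_neg] using hnonneg (-x) (by linarith)

theorem exists_abs_sub_add_le (hM : ∀ x, HasDerivAt M (m x) x) (hodd : ∀ x, M (-x) = -M x)
    (hm : Tendsto m atTop (𝓝 0)) {η : ℝ} (hη : 0 < η) :
    ∃ C, ∀ᶠ x in atTop, ∀ y, |M (x + y) - M x| ≤ C + η * |y| := by
  obtain ⟨A, hA⟩ := eventually_atTop.1 (Metric.tendsto_nhds.1 hm (η / 2) (by positivity))
  have hmA : ∀ u ≥ A, |m u| ≤ η / 2 := fun u hu => by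
    simpa [Real.dist_eq] using (hA u hu).le
  obtain ⟨C, hC⟩ := exists_abs_le_const_add_mul_abs hM hodd hmA
  have hC0 : 0 ≤ C := by simpa using (abs_nonneg _).trans (hC 0)
  refine ⟨2 * C + η * |A|, ?_⟩
  filter_upwards [eventually_ge_atTop A] with x hx y
  rcases le_total A (x + y) with hxy | hxy
  · have := abs_sub_le_of_abs_deriv_le hM hmA hx hxy
    rw [add_sub_cancel_left] at this
    nlinarith [abs_nonneg A, abs_nonneg y]
  · have h₁ : |x| ≤ |A| + |y| := abs_le.2
      ⟨by linarith [neg_abs_le A, abs_nonneg y], by linarith [le_abs_self A, neg_le_abs y]⟩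
    have h₂ : |x + y| ≤ |A| + |y| := abs_le.2
      ⟨by linarith [neg_abs_le A, neg_abs_le y], by linarith [le_abs_self A, abs_nonneg y]⟩
    calc |M (x + y) - M x| ≤ |M (x + y)| + |M x| := abs_sub _ _
      _ ≤ (C + η / 2 * |x + y|) + (C + η / 2 * |x|) := add_le_add (hC _) (hC _)
      _ ≤ 2 * C + η * |A| + η * |y| := by nlinarith

end LogCoordinates


theorem exp_le_exp_mul_rpow_add_rpow_neg {s z C a : ℝ} (hs : 0 < s)
    (hz : z ≤ C + a * |log s|) : exp z ≤ exp C * (s ^ a + s ^ (-a)) := by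
  refine (exp_le_exp.2 hz).trans ?_
  rw [exp_add]
  refine mul_le_mul_of_nonneg_left ?_ (exp_pos C).le
  rcases le_total 1 s with h | h
  · rw [abs_of_nonneg (log_nonneg h), mul_comm, ← rpow_def_of_pos hs]
    linarith [rpow_nonneg hs.le (-a)]
  · rw [abs_of_nonpos (log_nonpos hs.le h), mul_neg, ← neg_mul, mul_comm, ← rpow_def_of_pos hs]
    linarith [rpow_nonneg hs.le a]

theorem aestronglyMeasurable_of_integrableOn_rpow_mul {K : ℝ → ℝ} {a : ℝ}
    (hK : IntegrableOn (fun t => t ^ a * K t) (Ioi 0)) :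
    AEStronglyMeasurable K (volume.restrict (Ioi 0)) := by
  have hcont : ContinuousOn (fun t : ℝ => t ^ (-a)) (Ioi 0) :=
    fun t ht => (continuousAt_rpow_const t _ (Or.inl (ne_of_gt ht))).continuousWithinAt
  refine ((hcont.aestronglyMeasurable measurableSet_Ioi).mul hK.aestronglyMeasurable).congr ?_
  filter_upwards [ae_restrict_mem measurableSet_Ioi] with t (ht : 0 < t)
  rw [Pi.mul_apply, ← mul_assoc, ← rpow_add ht, neg_add_cancel, rpow_zero, one_mul]

theorem tendsto_setIntegral_mul_of_abs_le_rpow_add_rpow_neg {ι : Type*} {l : Filter ι}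
    [l.IsCountablyGenerated] {K : ℝ → ℝ} {φ : ι → ℝ → ℝ} {δ C : ℝ}
    (hK₁ : IntegrableOn (fun t => t ^ δ * K t) (Ioi 0))
    (hK₂ : IntegrableOn (fun t => t ^ (-δ) * K t) (Ioi 0))
    (hφm : ∀ᶠ i in l, AEStronglyMeasurable (φ i) (volume.restrict (Ioi 0)))
    (hφb : ∀ᶠ i in l, ∀ s > 0, |φ i s| ≤ C * (s ^ δ + s ^ (-δ)))
    (hφ : ∀ s > 0, Tendsto (fun i => φ i s) l (𝓝 1)) :
    Tendsto (fun i => ∫ s in Ioi 0, K s * φ i s) l (𝓝 (∫ s in Ioi 0, K s)) := by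
  have hK := aestronglyMeasurable_of_integrableOn_rpow_mul hK₁
  refine tendsto_integral_filter_of_dominated_convergence
    (fun s => C * (|s ^ δ * K s| + |s ^ (-δ) * K s|)) ?_ ?_
    ((hK₁.abs.add hK₂.abs).const_mul C) ?_
  · filter_upwards [hφm] with i hi using hK.mul hi
  · filter_upwards [hφb] with i hi
    filter_upwards [ae_restrict_mem measurableSet_Ioi] with s (hs : 0 < s)
    rw [Real.norm_eq_abs, abs_mul, abs_mul, abs_mul, abs_of_nonneg (rpow_nonneg hs.le _),
      abs_of_nonneg (rpow_nonneg hs.le _)]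
    calc |K s| * |φ i s| ≤ |K s| * (C * (s ^ δ + s ^ (-δ))) :=
          mul_le_mul_of_nonneg_left (hi s hs) (abs_nonneg _)
      _ = C * (s ^ δ * |K s| + s ^ (-δ) * |K s|) := by ring
  · filter_upwards [ae_restrict_mem measurableSet_Ioi] with s (hs : 0 < s)
    simpa using (hφ s hs).const_mul (K s)

theorem one_div_mul_setIntegral_comp_div_eq {K V : ℝ → ℝ} {r : ℝ} (hr : 0 < r) :
    1 / (r * V r) * ∫ t in Ioi 0, K (t / r) * V t = ∫ s in Ioi 0, K s * (V (r * s) / V r) := by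
  have hcv := integral_comp_mul_left_Ioi (fun t => K (t / r) * V t) 0 hr
  simp only [mul_zero, smul_eq_mul, mul_div_cancel_left₀ _ hr.ne'] at hcv
  simp_rw [mul_div_assoc', integral_div, hcv]
  field_simp

/-- `log V(eˣ)` for `V(r) = r ^ ρ(r)`. -/
noncomputable def proximateLog (ρ : ℝ → ℝ) (x : ℝ) : ℝ := x * ρ (exp x)

section ProximateOrder

variable {ρ : ℝ → ℝ}

theorem hasDerivAt_proximateLog {ρ' : ℝ → ℝ} (hderiv : ∀ r > 0, HasDerivAt ρ (ρ' r) r)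
    (x : ℝ) :
    HasDerivAt (proximateLog ρ) (exp x * ρ' (exp x) * x + ρ (exp x)) x := by
  refine ((hasDerivAt_id' x).mul
    ((hderiv _ (exp_pos x)).comp x (hasDerivAt_exp x))).congr_deriv ?_
  simp only [Function.comp_apply]
  ring

theorem rpow_self_eq_exp_proximateLog {r : ℝ} (hr : 0 < r) :
    r ^ ρ r = exp (proximateLog ρ (log r)) := by
  rw [proximateLog, exp_log hr, rpow_def_of_pos hr]

theorem proximateLog_neg (hsym : ∀ r > (0 : ℝ), r ^ ρ r * (1 / r) ^ ρ (1 / r) = 1) (x : ℝ) :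
    proximateLog ρ (-x) = -proximateLog ρ x := by
  have h := hsym (exp x) (exp_pos x)
  rw [one_div, ← exp_neg, rpow_self_eq_exp_proximateLog (exp_pos _),
    rpow_self_eq_exp_proximateLog (exp_pos _), ← exp_add, exp_eq_one_iff, log_exp,
    log_exp] at h
  linarith

end ProximateOrder

/-- Theorem C: for a zero proximate order with `V(r)V(1/r) = 1` and a
kernel `K` with `t^{±δ} K(t) ∈ L¹(0,∞)`,
`(1/(rV(r))) ∫₀^∞ K(t/r) V(t) dt → ∫₀^∞ K(t) dt`. -/
theorem stmt17 (ρ ρ' : ℝ → ℝ)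
    (hderiv : ∀ r > 0, HasDerivAt ρ (ρ' r) r)
    (hρ0 : Tendsto ρ atTop (nhds 0))
    (hslow : Tendsto (fun r => r * ρ' r * Real.log r) atTop (nhds 0))
    (hsym : ∀ r > (0 : ℝ), r ^ ρ r * (1 / r) ^ ρ (1 / r) = 1)
    (K : ℝ → ℝ) (δ : ℝ) (hδ : 0 < δ)
    (hK1 : MeasureTheory.IntegrableOn (fun t => t ^ δ * K t) (Set.Ioi 0))
    (hK2 : MeasureTheory.IntegrableOn (fun t => t ^ (-δ) * K t) (Set.Ioi 0)) :
    Tendsto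
      (fun r => (1 / (r * r ^ ρ r)) * ∫ t in Set.Ioi (0 : ℝ), K (t / r) * t ^ ρ t)
      atTop (nhds (∫ t in Set.Ioi (0 : ℝ), K t)) := by
  have hM := hasDerivAt_proximateLog hderiv
  have hm : Tendsto (fun x => exp x * ρ' (exp x) * x + ρ (exp x)) atTop (𝓝 0) := by
    simpa [Function.comp_def] using (hslow.add hρ0).comp tendsto_exp_atTop
  obtain ⟨C, hC⟩ := exists_abs_sub_add_le hM (proximateLog_neg hsym) hm hδ
  have hMm : Measurable (proximateLog ρ) :=
    (continuous_iff_continuousAt.2 fun x => (hM x).continuousAt).measurable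
  refine (tendsto_setIntegral_mul_of_abs_le_rpow_add_rpow_neg hK1 hK2 (C := exp C)
    (φ := fun r s => exp (proximateLog ρ (log r + log s) - proximateLog ρ (log r)))
    (Eventually.of_forall fun r => (by fun_prop : Measurable _).aestronglyMeasurable) ?_
    fun s _ => ?_).congr' ?_
  · filter_upwards [tendsto_log_atTop.eventually hC] with r hr s hs
    rw [abs_of_pos (exp_pos _)]
    exact exp_le_exp_mul_rpow_add_rpow_neg hs ((le_abs_self _).trans (hr _))
  · simpa [Function.comp_def] using (continuous_exp.tendsto 0).comp
      ((tendsto_sub_add_of_tendsto_deriv hM hm (log s)).comp tendsto_log_atTop)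
  · filter_upwards [eventually_gt_atTop 0] with r hr
    refine (setIntegral_congr_fun measurableSet_Ioi fun s (hs : 0 < s) => ?_).trans
      (one_div_mul_setIntegral_comp_div_eq (V := fun t => t ^ ρ t) hr).symm
    rw [rpow_self_eq_exp_proximateLog hr, rpow_self_eq_exp_proximateLog (mul_pos hr hs),
      log_mul hr.ne' hs.ne', exp_sub]
end

section
/- Let ρ(r) be a zero proximate order with lim_{r→∞} (ln r)/r^{ρ(r)} = 0. Then there exists an entire transcendental function f such that limsup_{r→∞} ln M(r,f)/r^{ρ(r)} = 1; in particular ρ(r) is a proximate order of f. -/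
/-!
Put `W(x) = V(eˣ) = exp (x ρ(eˣ))`. The hypothesis `ln r / r^{ρ(r)} → 0` says that `W` grows
superlinearly, so its Legendre conjugate `W*(n) = sup_x (n x - W x)` is finite, and
`f(z) = ∑ exp(-W*(n)) zⁿ` is entire, with `M(r, f) = f(r)` since the coefficients are positive.
Young's inequality `n x - W*(n) ≤ W x`, applied at `x + ln 2`, gives
`ln M(eˣ, f) ≤ ln 2 + W(x + ln 2)`. Conversely, for large `n` the supremum defining `W*(n)` is almost
attained at some large `y`, and then the single term `n y - W*(n) > W y - 1` gives
`ln M(eʸ, f) ≥ W y - 1`. Since `r ρ'(r) ln r → 0` and `ρ → 0`, `(ln W)' → 0`, so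
`W(x + ln 2) / W(x) → 1` and the two bounds squeeze the upper limit to `1`. A polynomial of degree `d`
has `M(r) = O(r^d)`, which the positive coefficients beyond `d` forbid.
-/

open Filter Set

/-- Maximum modulus of `f` on the circle of radius `r`. -/
noncomputable def maxMod (f : ℂ → ℂ) (r : ℝ) : ℝ :=
  sSup ((fun z => ‖f z‖) '' Metric.sphere (0 : ℂ) r)

open Real Topology

noncomputable def powerSeriesFun (a : ℕ → ℝ) (z : ℂ) : ℂ :=
  ∑' n, (a n : ℂ) * z ^ n

lemma Polynomial.norm_eval_le_of_one_le_norm (p : Polynomial ℂ) {z : ℂ} (hz : 1 ≤ ‖z‖) :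
    ‖p.eval z‖ ≤ (∑ i ∈ Finset.range (p.natDegree + 1), ‖p.coeff i‖) * ‖z‖ ^ p.natDegree := by
  rw [Polynomial.eval_eq_sum_range, Finset.sum_mul]
  refine (norm_sum_le _ _).trans (Finset.sum_le_sum fun i hi => ?_)
  rw [norm_mul, norm_pow]
  gcongr
  exact Nat.lt_succ_iff.mp (Finset.mem_range.mp hi)

section NonnegCoeff

variable {a : ℕ → ℝ}

lemma norm_ofReal_mul_pow {c : ℝ} (hc : 0 ≤ c) (n : ℕ) (z : ℂ) :
    ‖(c : ℂ) * z ^ n‖ = c * ‖z‖ ^ n := by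
  rw [norm_mul, norm_pow, Complex.norm_real, Real.norm_of_nonneg hc]

lemma powerSeriesFun_ofReal (r : ℝ) :
    powerSeriesFun a r = ((∑' n, a n * r ^ n : ℝ) : ℂ) := by
  simp only [powerSeriesFun, Complex.ofReal_tsum, Complex.ofReal_mul, Complex.ofReal_pow]

lemma differentiable_powerSeriesFun (ha : ∀ n, 0 ≤ a n)
    (hsum : ∀ r, 0 ≤ r → Summable fun n => a n * r ^ n) :
    Differentiable ℂ (powerSeriesFun a) := by
  intro z
  have hz : z ∈ Metric.ball (0 : ℂ) (‖z‖ + 1) := by simp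
  refine (Complex.differentiableOn_tsum_of_summable_norm (hsum (‖z‖ + 1) (by positivity))
    (fun n => ((differentiable_const _).mul (differentiable_pow n)).differentiableOn)
    Metric.isOpen_ball (fun n w hw => ?_)).differentiableAt (Metric.isOpen_ball.mem_nhds hz)
  rw [norm_ofReal_mul_pow (ha _)]
  have hw : ‖w‖ ≤ ‖z‖ + 1 := by simpa using (Metric.mem_ball.mp hw).le
  gcongr
  exact ha n

lemma maxMod_powerSeriesFun (ha : ∀ n, 0 ≤ a n)
    (hsum : ∀ r, 0 ≤ r → Summable fun n => a n * r ^ n) {r : ℝ} (hr : 0 ≤ r) :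
    maxMod (powerSeriesFun a) r = ∑' n, a n * r ^ n := by
  have hnonneg : 0 ≤ ∑' n, a n * r ^ n := tsum_nonneg fun n => mul_nonneg (ha n) (pow_nonneg hr n)
  refine IsGreatest.csSup_eq ⟨⟨r, by simp [abs_of_nonneg hr], ?_⟩, ?_⟩
  · simp only [powerSeriesFun_ofReal, Complex.norm_real, Real.norm_of_nonneg hnonneg]
  · rintro _ ⟨z, hz, rfl⟩
    have hzr : ‖z‖ = r := by simpa using hz
    have hsumz : Summable fun n => ‖(a n : ℂ) * z ^ n‖ := by
      simpa only [norm_ofReal_mul_pow (ha _), hzr] using hsum r hr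
    calc ‖powerSeriesFun a z‖ ≤ ∑' n, ‖(a n : ℂ) * z ^ n‖ := norm_tsum_le_tsum_norm hsumz
      _ = ∑' n, a n * r ^ n := by simp only [norm_ofReal_mul_pow (ha _), hzr]

lemma powerSeriesFun_ne_polynomial (ha : ∀ n, 0 ≤ a n)
    (hsum : ∀ r, 0 ≤ r → Summable fun n => a n * r ^ n) (hpos : ∃ᶠ n in atTop, 0 < a n) :
    ¬ ∃ p : Polynomial ℂ, ∀ z, powerSeriesFun a z = p.eval z := by
  rintro ⟨p, hp⟩
  set d := p.natDegree
  set C := ∑ i ∈ Finset.range (d + 1), ‖p.coeff i‖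
  obtain ⟨m, hm, ham⟩ := frequently_atTop.mp hpos (d + 1)
  set r := max 1 ((C + 1) / a m)
  have hr : 1 ≤ r := le_max_left _ _
  have hr0 : 0 ≤ r := zero_le_one.trans hr
  have hterms : ∀ n, 0 ≤ a n * r ^ n := fun n => mul_nonneg (ha n) (pow_nonneg hr0 n)
  have hterm : a m * r ^ m ≤ C * r ^ d := calc
    a m * r ^ m ≤ ∑' n, a n * r ^ n := (hsum r hr0).le_tsum m fun n _ => hterms n
    _ = ‖p.eval (r : ℂ)‖ := by
      rw [← hp, powerSeriesFun_ofReal, Complex.norm_real, Real.norm_of_nonneg (tsum_nonneg hterms)]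
    _ ≤ C * r ^ d := by
      simpa [abs_of_nonneg hr0] using
        p.norm_eval_le_of_one_le_norm (z := r) (by simpa [abs_of_nonneg hr0])
  have hgrow : a m * r * r ^ d ≤ a m * r ^ m := by
    rw [mul_assoc, ← pow_succ']
    exact mul_le_mul_of_nonneg_left (pow_le_pow_right₀ hr hm) ham.le
  have hlarge : C + 1 ≤ a m * r := by
    rw [← div_le_iff₀' ham]
    exact le_max_right _ _
  have hrd : 0 < r ^ d := by positivity
  nlinarith

end NonnegCoeff

-- As a `⨆` over `ℝ` this is `0` when the range is unbounded above; `bddAbove_range_mul_sub`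
-- excludes that for `t ≥ 0` and superlinear `W`.
noncomputable def legendreConj (W : ℝ → ℝ) (t : ℝ) : ℝ :=
  ⨆ x, t * x - W x

noncomputable def legendreCoeff (W : ℝ → ℝ) (n : ℕ) : ℝ :=
  exp (-legendreConj W n)

section Legendre

variable {W : ℝ → ℝ}

lemma eventually_mul_le_of_tendsto_div_zero (hpos : ∀ x, 0 < W x)
    (hdiv : Tendsto (fun x => x / W x) atTop (𝓝 0)) (c : ℝ) :
    ∀ᶠ x in atTop, c * x ≤ W x := by
  filter_upwards [hdiv.eventually (gt_mem_nhds (by positivity : (0 : ℝ) < 1 / (|c| + 1))),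
    eventually_ge_atTop 0] with x hx hx0
  rw [div_lt_div_iff₀ (hpos x) (by positivity)] at hx
  nlinarith [le_abs_self c]

lemma bddAbove_range_mul_sub (hpos : ∀ x, 0 < W x) (hsuper : ∀ c, ∀ᶠ x in atTop, c * x ≤ W x)
    {t : ℝ} (ht : 0 ≤ t) : BddAbove (range fun x => t * x - W x) := by
  obtain ⟨X, hX⟩ := eventually_atTop.mp (hsuper t)
  refine ⟨max (t * X) 0, forall_mem_range.mpr fun x => ?_⟩
  rcases le_total X x with hx | hx
  · exact le_max_of_le_right (sub_nonpos.mpr (hX x hx))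
  · exact le_max_of_le_left (by nlinarith [hpos x])

lemma mul_sub_le_legendreConj (hpos : ∀ x, 0 < W x) (hsuper : ∀ c, ∀ᶠ x in atTop, c * x ≤ W x)
    {t : ℝ} (ht : 0 ≤ t) (x : ℝ) : t * x - W x ≤ legendreConj W t :=
  le_ciSup (bddAbove_range_mul_sub hpos hsuper ht) x

lemma legendreCoeff_pos (n : ℕ) : 0 < legendreCoeff W n := exp_pos _

lemma legendreCoeff_mul_exp_pow (n : ℕ) (x : ℝ) :
    legendreCoeff W n * exp x ^ n = exp (n * x - legendreConj W n) := by
  rw [legendreCoeff, ← exp_nat_mul, ← exp_add]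
  ring_nf

lemma legendreCoeff_mul_exp_pow_le (hpos : ∀ x, 0 < W x)
    (hsuper : ∀ c, ∀ᶠ x in atTop, c * x ≤ W x) (n : ℕ) (x : ℝ) :
    legendreCoeff W n * exp x ^ n ≤ exp (W (x + log 2)) * (1 / 2) ^ n := by
  have hyoung := mul_sub_le_legendreConj hpos hsuper n.cast_nonneg (x + log 2)
  have hhalf : (1 / 2 : ℝ) ^ n = exp (-(n * log 2)) := by
    rw [exp_neg, exp_nat_mul, exp_log two_pos, one_div, inv_pow]
  rw [legendreCoeff_mul_exp_pow, hhalf, ← exp_add, exp_le_exp]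
  linarith

lemma summable_legendreCoeff_mul_pow (hpos : ∀ x, 0 < W x)
    (hsuper : ∀ c, ∀ᶠ x in atTop, c * x ≤ W x) {r : ℝ} (hr : 0 ≤ r) :
    Summable fun n => legendreCoeff W n * r ^ n := by
  have hrexp : r ≤ exp r := by linarith [add_one_le_exp r]
  refine Summable.of_nonneg_of_le (fun n => mul_nonneg (legendreCoeff_pos n).le (pow_nonneg hr n))
    (fun n => ?_) (summable_geometric_two.mul_left (exp (W (r + log 2))))
  calc legendreCoeff W n * r ^ n ≤ legendreCoeff W n * exp r ^ n := by
        gcongr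
        exact (legendreCoeff_pos n).le
    _ ≤ _ := legendreCoeff_mul_exp_pow_le hpos hsuper n r

lemma log_tsum_legendreCoeff_mul_exp_pow_le (hpos : ∀ x, 0 < W x)
    (hsuper : ∀ c, ∀ᶠ x in atTop, c * x ≤ W x) (x : ℝ) :
    log (∑' n, legendreCoeff W n * exp x ^ n) ≤ log 2 + W (x + log 2) := by
  have hsum := summable_legendreCoeff_mul_pow hpos hsuper (exp_pos x).le
  have hgeom := summable_geometric_two.mul_left (exp (W (x + log 2)))
  have htsum_pos : 0 < ∑' n, legendreCoeff W n * exp x ^ n :=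
    hsum.tsum_pos (fun n => (mul_pos (legendreCoeff_pos n) (pow_pos (exp_pos x) n)).le) 0
      (by simpa using legendreCoeff_pos 0)
  calc log (∑' n, legendreCoeff W n * exp x ^ n)
      ≤ log (∑' n : ℕ, exp (W (x + log 2)) * (1 / 2) ^ n) :=
        log_le_log htsum_pos <|
          hsum.tsum_le_tsum (legendreCoeff_mul_exp_pow_le hpos hsuper · x) hgeom
    _ = log 2 + W (x + log 2) := by
        rw [tsum_mul_left, tsum_geometric_two, log_mul (exp_ne_zero _) two_ne_zero, log_exp,
          add_comm]

lemma frequently_sub_one_le_log_tsum (hpos : ∀ x, 0 < W x)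
    (hsuper : ∀ c, ∀ᶠ x in atTop, c * x ≤ W x) :
    ∃ᶠ y in atTop, W y - 1 ≤ log (∑' n, legendreCoeff W n * exp y ^ n) := by
  refine frequently_atTop.mpr fun B => ?_
  set n : ℕ := ⌈W (B + 1) + 1⌉₊
  have hn : W (B + 1) + 1 ≤ n := Nat.le_ceil _
  have hyoung := mul_sub_le_legendreConj hpos hsuper n.cast_nonneg (B + 1)
  -- `y` almost attains `W*(n)`; as `W*(n) ≥ n B + 1` by the choice of `n`, it lies beyond `B`.
  obtain ⟨y, hy⟩ := exists_lt_of_lt_ciSup (f := fun x => (n : ℝ) * x - W x)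
    (sub_one_lt (legendreConj W n))
  refine ⟨y, ?_, ?_⟩
  · by_contra! hyB
    nlinarith [hpos y, mul_le_mul_of_nonneg_left hyB.le n.cast_nonneg]
  · calc W y - 1 ≤ n * y - legendreConj W n := by linarith
      _ = log (legendreCoeff W n * exp y ^ n) := by rw [legendreCoeff_mul_exp_pow, log_exp]
      _ ≤ log (∑' n, legendreCoeff W n * exp y ^ n) :=
        log_le_log (mul_pos (legendreCoeff_pos n) (pow_pos (exp_pos y) n)) <|
          (summable_legendreCoeff_mul_pow hpos hsuper (exp_pos y).le).le_tsum n
            fun m _ => (mul_pos (legendreCoeff_pos m) (pow_pos (exp_pos y) m)).le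

end Legendre

lemma limsup_eq_of_eventually_le_of_frequently_ge {α : Type*} {l : Filter α} [l.NeBot]
    {g u v : α → ℝ} {a : ℝ} (hu : Tendsto u l (𝓝 a)) (hv : Tendsto v l (𝓝 a))
    (hgu : ∀ᶠ x in l, g x ≤ u x) (hvg : ∃ᶠ x in l, v x ≤ g x) : limsup g l = a := by
  have hbdd : IsBoundedUnder (· ≤ ·) l g := hu.isBoundedUnder_le.mono_le hgu
  have hcobdd : IsCoboundedUnder (· ≤ ·) l g :=
    IsCoboundedUnder.of_frequently_ge <|
      ((hv.eventually (eventually_ge_nhds (sub_one_lt a))).and_frequently hvg).mono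
        fun x hx => hx.1.trans hx.2
  refine le_antisymm ?_ ?_
  · exact (limsup_le_limsup hgu hcobdd hu.isBoundedUnder_le).trans_eq hu.limsup_eq
  · exact hv.liminf_eq.symm.trans_le
      (liminf_le_limsup_of_frequently_le hvg hv.isBoundedUnder_ge hbdd)

lemma limsup_div_eq_one_of_shift {G W : ℝ → ℝ} {h b c : ℝ} (hW : Tendsto W atTop atTop)
    (hshift : Tendsto (fun x => W (x + h) / W x) atTop (𝓝 1))
    (hupper : ∀ᶠ x in atTop, G x ≤ b + W (x + h)) (hlower : ∃ᶠ x in atTop, W x - c ≤ G x) :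
    limsup (fun x => G x / W x) atTop = 1 := by
  have hWpos : ∀ᶠ x in atTop, 0 < W x := hW.eventually_gt_atTop 0
  refine limsup_eq_of_eventually_le_of_frequently_ge (u := fun x => b / W x + W (x + h) / W x)
    (v := fun x => 1 - c / W x) ?_ ?_ ?_ ?_
  · simpa using (tendsto_const_nhds.div_atTop hW).add hshift
  · simpa using ((tendsto_const_nhds (x := c)).div_atTop hW).const_sub 1
  · filter_upwards [hupper, hWpos] with x hx hWx
    rw [← add_div]
    exact div_le_div_of_nonneg_right hx hWx.le
  · refine (hlower.and_eventually hWpos).mono fun x ⟨hx, hWx⟩ => ?_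
    rw [one_sub_div hWx.ne']
    exact div_le_div_of_nonneg_right hx hWx.le

lemma tendsto_sub_comp_add_of_deriv_tendsto_zero {φ φ' : ℝ → ℝ}
    (hφ : ∀ x, HasDerivAt φ (φ' x) x) (h0 : Tendsto φ' atTop (𝓝 0)) {h : ℝ} (hh : 0 ≤ h) :
    Tendsto (fun x => φ (x + h) - φ x) atTop (𝓝 0) := by
  refine Metric.tendsto_atTop.mpr fun ε hε => ?_
  obtain ⟨N, hN⟩ := Metric.tendsto_atTop.mp h0 (ε / (h + 1)) (by positivity)
  refine ⟨N, fun x hx => ?_⟩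
  have hmvt := norm_image_sub_le_of_norm_deriv_le_segment' (f := φ) (C := ε / (h + 1))
    (fun y _ => (hφ y).hasDerivWithinAt)
    (fun y hy => by simpa using (hN y (hx.trans hy.1)).le) (x + h) ⟨by linarith, le_rfl⟩
  rw [dist_zero_right]
  calc ‖φ (x + h) - φ x‖ ≤ ε / (h + 1) * h := by simpa using hmvt
    _ < ε := by rw [div_mul_eq_mul_div, div_lt_iff₀ (by positivity)]; nlinarith

lemma tendsto_mul_comp_exp_shift_sub {ρ ρ' : ℝ → ℝ} (hderiv : ∀ r > 0, HasDerivAt ρ (ρ' r) r)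
    (hρ0 : Tendsto ρ atTop (𝓝 0)) (hslow : Tendsto (fun r => r * ρ' r * log r) atTop (𝓝 0))
    {h : ℝ} (hh : 0 ≤ h) :
    Tendsto (fun x => (x + h) * ρ (exp (x + h)) - x * ρ (exp x)) atTop (𝓝 0) := by
  refine tendsto_sub_comp_add_of_deriv_tendsto_zero (fun x => ?_) ?_ hh
    (φ := fun x => x * ρ (exp x)) (φ' := fun x => ρ (exp x) + exp x * ρ' (exp x) * x)
  · refine ((hasDerivAt_id x).mul ((hderiv _ (exp_pos x)).comp x (hasDerivAt_exp x))).congr_deriv ?_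
    simp only [id, one_mul, Function.comp_apply]
    ring
  · simpa [Function.comp_def] using
      (hρ0.comp tendsto_exp_atTop).add (hslow.comp tendsto_exp_atTop)

/-- main theorem, sufficiency: if `ρ` is a zero proximate order with
`(ln r)/r^{ρ(r)} → 0`, then there is an entire transcendental function `f` with
`limsup ln M(r,f)/r^{ρ(r)} = 1`. -/
theorem stmt18 (ρ ρ' : ℝ → ℝ)
    (hderiv : ∀ r > 0, HasDerivAt ρ (ρ' r) r)
    (hρ0 : Tendsto ρ atTop (nhds 0))
    (hslow : Tendsto (fun r => r * ρ' r * Real.log r) atTop (nhds 0))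
    (hlog : Tendsto (fun r => Real.log r / r ^ ρ r) atTop (nhds 0)) :
    ∃ f : ℂ → ℂ, Differentiable ℂ f ∧
      (¬ ∃ p : Polynomial ℂ, ∀ z, f z = p.eval z) ∧
      limsup (fun r => Real.log (maxMod f r) / r ^ ρ r) atTop = 1 := by
  set W : ℝ → ℝ := fun x => exp (x * ρ (exp x)) with hW
  have hWpos : ∀ x, 0 < W x := fun x => exp_pos _
  have hrpow : ∀ r, 0 < r → r ^ ρ r = W (log r) := fun r hr => by
    simp only [rpow_def_of_pos hr, hW, exp_log hr]
  have hsuper : ∀ c, ∀ᶠ x in atTop, c * x ≤ W x :=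
    eventually_mul_le_of_tendsto_div_zero hWpos <|
      (hlog.comp tendsto_exp_atTop).congr fun x => by simp [hrpow _ (exp_pos x)]
  have hWtop : Tendsto W atTop atTop :=
    tendsto_atTop_mono' atTop ((hsuper 1).mono fun x hx => by simpa using hx) tendsto_id
  have hshift : Tendsto (fun x => W (x + log 2) / W x) atTop (𝓝 1) := by
    simpa [hW, Function.comp_def, ← exp_sub] using ((continuous_exp.tendsto 0).comp
      (tendsto_mul_comp_exp_shift_sub hderiv hρ0 hslow (log_nonneg one_le_two)))
  have hnonneg : ∀ n, 0 ≤ legendreCoeff W n := fun n => (legendreCoeff_pos n).le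
  have hsum : ∀ r, 0 ≤ r → Summable fun n => legendreCoeff W n * r ^ n :=
    fun r => summable_legendreCoeff_mul_pow hWpos hsuper
  have hM : ∀ x, maxMod (powerSeriesFun (legendreCoeff W)) (exp x) =
      ∑' n, legendreCoeff W n * exp x ^ n := fun x =>
    maxMod_powerSeriesFun hnonneg hsum (exp_pos x).le
  refine ⟨powerSeriesFun (legendreCoeff W), differentiable_powerSeriesFun hnonneg hsum,
    powerSeriesFun_ne_polynomial hnonneg hsum (.of_forall legendreCoeff_pos), ?_⟩
  rw [← map_exp_atTop, ← limsup_comp]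
  convert limsup_div_eq_one_of_shift hWtop hshift (b := log 2) (c := 1)
    (.of_forall (log_tsum_legendreCoeff_mul_exp_pow_le hWpos hsuper))
    (frequently_sub_one_le_log_tsum hWpos hsuper) using 2
  ext x
  rw [Function.comp_apply, hM, hrpow _ (exp_pos x), log_exp]
end
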